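/- Let L, M, N ⊆ [m] with L a proper subset of [m], and let C = C(Δ_L^c, Δ_M, Δ_N). If |L| ≤ m − 2, then C is a minimal code; moreover, if |M| + |N| ≥ 3, then C is self-orthogonal. -/

import Mathlib

open Finset Polynomial
open scoped Classical

/-- `V m` is the vector space `F₂^m`. -/
abbrev V (m : ℕ) := Fin m → ZMod 2

/-- Dot product `x·y = Σ_i x_i y_i` in `F₂`. -/
def dot {m : ℕ} (x y : V m) : ZMod 2 := ∑ i, x i * y i

/-- `Supp v = {i : v i ≠ 0}`. -/
def supp {m : ℕ} (v : V m) : Finset (Fin m) := Finset.univ.filter fun i => v i ≠ 0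

/-- The simplicial complex `Δ_L = {v : Supp v ⊆ L}` generated by `L`. -/
def Δ {m : ℕ} (L : Finset (Fin m)) : Finset (V m) := Finset.univ.filter fun v => supp v ⊆ L

/-- Hamming weight of a vector. -/
def wtv {ι : Type} [Fintype ι] (c : ι → ZMod 2) : ℕ :=
  (Finset.univ.filter fun i => c i ≠ 0).card

/-- The linear functional `x ↦ x·y`. -/
noncomputable def dotL {m : ℕ} (y : V m) : V m →ₗ[ZMod 2] ZMod 2 :=
  ∑ i, LinearMap.smulRight (LinearMap.proj i) (y i)

/-- The linear map `(α,β,γ) ↦ ((d₁,d₂,d₃) ↦ α·d₁ + (β+γ)·d₂ + β·d₃)` whose range is the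
binary code `C(D₁,D₂,D₃)`. -/
noncomputable def codeMap {m : ℕ} (D₁ D₂ D₃ : Finset (V m)) :
    (V m × V m × V m) →ₗ[ZMod 2]
      (({x // x ∈ D₁} × {x // x ∈ D₂} × {x // x ∈ D₃}) → ZMod 2) :=
  LinearMap.pi fun d =>
    (dotL d.1.1).comp (LinearMap.fst (ZMod 2) (V m) (V m × V m))
    + (dotL d.2.1.1).comp
        (((LinearMap.fst (ZMod 2) (V m) (V m)).comp (LinearMap.snd (ZMod 2) (V m) (V m × V m)))
          + ((LinearMap.snd (ZMod 2) (V m) (V m)).comp (LinearMap.snd (ZMod 2) (V m) (V m × V m))))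
    + (dotL d.2.2.1).comp
        ((LinearMap.fst (ZMod 2) (V m) (V m)).comp (LinearMap.snd (ZMod 2) (V m) (V m × V m)))

lemma codeMap_apply {m : ℕ} (D₁ D₂ D₃ : Finset (V m)) (α β γ : V m)
    (d : {x // x ∈ D₁} × {x // x ∈ D₂} × {x // x ∈ D₃}) :
    codeMap D₁ D₂ D₃ (α, β, γ) d = dot α d.1.1 + dot (β + γ) d.2.1.1 + dot β d.2.2.1 := by
  simp [codeMap, dotL, dot, LinearMap.smulRight, mul_comm]

/-- A binary linear code (given as a set of codewords) is minimal if the support of a nonzero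
codeword never strictly contains the support of another nonzero codeword. -/
def IsMinimalCode {ι : Type} (C : Set (ι → ZMod 2)) : Prop :=
  ∀ u ∈ C, u ≠ 0 → ∀ v ∈ C, v ≠ 0 → Function.support v ⊆ Function.support u → v = u

/-- A binary code is self-orthogonal if any two codewords are orthogonal. -/
def IsSelfOrthogonal {ι : Type} [Fintype ι] (C : Set (ι → ZMod 2)) : Prop :=
  ∀ c ∈ C, ∀ c' ∈ C, ∑ i, c i * c' i = 0

/-!
Write `χ(a) = (-1)^a`. For a binary word `c` on a finite index set `I`,
`2 wt(c) = |I| - Σ_i χ(c_i)`, and for `c = c(α,β,γ)` on `Δ_L^c × Δ_M × Δ_N` the character sum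
factors as `(Σ_{d ∈ Δ_L^c} χ(α·d)) (Σ_{d ∈ Δ_M} χ((β+γ)·d)) (Σ_{d ∈ Δ_N} χ(β·d))`.
Over `Δ_S` the sum `Σ χ(x·d)` is `2^|S|` or `0` according as `x` vanishes on `S` or not, so
`2 wt(c)` only takes the values `0`, `(2^m - 2^|L|) 2^(|M|+|N|)` and `2^(m+|M|+|N|)`.
When `|L| ≤ m - 2` the largest nonzero weight is less than twice the smallest, which forces
minimality since `wt(u) = wt(v) + wt(u + v)` whenever `Supp v ⊆ Supp u` (Ashikhmin–Barg).
When `|M| + |N| ≥ 3` every weight is divisible by `4`, which forces self-orthogonality since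
`wt(c + c') = wt(c) + wt(c') - 2 |Supp c ∩ Supp c'|`.
-/

section BinaryWeight

variable {ι : Type} [Fintype ι]

theorem wtv_eq_sum_val (c : ι → ZMod 2) : wtv c = ∑ i, (c i).val := by
  rw [wtv, Finset.card_filter]
  refine Finset.sum_congr rfl fun i _ => ?_
  generalize c i = a
  fin_cases a <;> rfl

theorem wtv_eq_zero_iff {c : ι → ZMod 2} : wtv c = 0 ↔ c = 0 := by
  simp [wtv, Finset.filter_eq_empty_iff, funext_iff]

theorem wtv_add_add_two_mul (c c' : ι → ZMod 2) :
    wtv (c + c') + 2 * ∑ i, (c i * c' i).val = wtv c + wtv c' := by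
  simp only [wtv_eq_sum_val, Finset.mul_sum, ← Finset.sum_add_distrib, Pi.add_apply]
  refine Finset.sum_congr rfl fun i _ => ?_
  generalize c i = a; generalize c' i = b
  fin_cases a <;> fin_cases b <;> rfl

theorem wtv_eq_add_of_support_subset {u v : ι → ZMod 2}
    (h : Function.support v ⊆ Function.support u) : wtv u = wtv v + wtv (u + v) := by
  simp only [wtv_eq_sum_val, ← Finset.sum_add_distrib, Pi.add_apply]
  refine Finset.sum_congr rfl fun i _ => ?_
  have hval : ∀ a b : ZMod 2, (b ≠ 0 → a ≠ 0) → a.val = b.val + (a + b).val := by decide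
  exact hval _ _ (@h i)

theorem isSelfOrthogonal_of_four_dvd_wtv (C : Submodule (ZMod 2) (ι → ZMod 2))
    (h : ∀ c ∈ C, 4 ∣ wtv c) : IsSelfOrthogonal (C : Set (ι → ZMod 2)) := by
  intro c hc c' hc'
  have hsum := wtv_add_add_two_mul c c'
  have h₁ := h c hc; have h₂ := h c' hc'; have h₃ := h _ (C.add_mem hc hc')
  have heven : 2 ∣ ∑ i, (c i * c' i).val := by omega
  rw [← ZMod.natCast_eq_zero_iff] at heven
  simpa using heven

theorem isMinimalCode_of_wtv_lt_two_mul (C : Submodule (ZMod 2) (ι → ZMod 2))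
    (h : ∀ u ∈ C, ∀ v ∈ C, u ≠ 0 → v ≠ 0 → wtv u < 2 * wtv v) :
    IsMinimalCode (C : Set (ι → ZMod 2)) := by
  intro u hu hu0 v hv hv0 hvu
  by_contra hne
  have hw0 : u + v ≠ 0 := fun h0 =>
    hne (by rw [← neg_eq_of_add_eq_zero_right h0, ZModModule.neg_eq_self])
  have hsplit := wtv_eq_add_of_support_subset hvu
  have h₁ := h u hu v hv hu0 hv0
  have h₂ := h u hu _ (C.add_mem hu hv) hu0 hw0
  omega

def signChar (a : ZMod 2) : ℤ := if a = 0 then 1 else -1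

theorem signChar_add (a b : ZMod 2) : signChar (a + b) = signChar a * signChar b := by
  fin_cases a <;> fin_cases b <;> rfl

theorem two_mul_wtv (c : ι → ZMod 2) :
    2 * (wtv c : ℤ) = Fintype.card ι - ∑ i, signChar (c i) := by
  rw [wtv_eq_sum_val, ← Finset.card_univ, Finset.card_eq_sum_ones, Nat.cast_sum, Finset.mul_sum,
    Nat.cast_sum, ← Finset.sum_sub_distrib]
  refine Finset.sum_congr rfl fun i _ => ?_
  generalize c i = a
  fin_cases a <;> rfl

end BinaryWeight

section SimplexCode

variable {m : ℕ}

theorem mem_Δ {S : Finset (Fin m)} {v : V m} : v ∈ Δ S ↔ ∀ i ∉ S, v i = 0 := by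
  simp only [Δ, supp, Finset.mem_filter, Finset.mem_univ, true_and, Finset.subset_iff]
  exact forall_congr' fun i => not_imp_comm

theorem Δ_univ : Δ (Finset.univ : Finset (Fin m)) = Finset.univ := by
  ext v; simp [mem_Δ]

theorem card_Δ (S : Finset (Fin m)) : (Δ S).card = 2 ^ S.card := by
  have : Δ S = Fintype.piFinset fun i => if i ∈ S then Finset.univ else {0} := by
    ext v
    simp only [mem_Δ, Fintype.mem_piFinset]
    refine forall_congr' fun i => ?_
    split_ifs with hi <;> simp [hi]
  rw [this, Fintype.card_piFinset]
  simp [apply_ite Finset.card, Finset.prod_ite_mem]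

theorem dot_add_right (x v w : V m) : dot x (v + w) = dot x v + dot x w := by
  simp [dot, mul_add, Finset.sum_add_distrib]

theorem dot_single_one (x : V m) (i : Fin m) : dot x (Pi.single i 1) = x i := by
  simp [dot, Pi.single_apply]

theorem dot_eq_zero_of_mem_Δ {S : Finset (Fin m)} {x v : V m} (hx : ∀ i ∈ S, x i = 0)
    (hv : v ∈ Δ S) : dot x v = 0 := by
  refine Finset.sum_eq_zero fun i _ => ?_
  by_cases hi : i ∈ S
  · rw [hx i hi, zero_mul]
  · rw [mem_Δ.1 hv i hi, mul_zero]

theorem sum_signChar_dot_Δ (S : Finset (Fin m)) (x : V m) :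
    ∑ v ∈ Δ S, signChar (dot x v) = if ∀ i ∈ S, x i = 0 then 2 ^ S.card else 0 := by
  split_ifs with hx
  · rw [Finset.sum_congr rfl fun v hv => by rw [dot_eq_zero_of_mem_Δ hx hv]]
    simp [signChar, card_Δ]
  push Not at hx
  obtain ⟨i₀, hi₀, hxi₀⟩ := hx
  have hflip : ∀ v, dot x (v + Pi.single i₀ 1) = dot x v + 1 := by
    intro v
    rw [dot_add_right, dot_single_one, (by decide : ∀ a : ZMod 2, a ≠ 0 → a = 1) _ hxi₀]
  refine Finset.sum_involution (fun v _ => v + Pi.single i₀ 1) (fun v _ => ?_)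
    (fun v _ _ => ?_) (fun v hv => ?_) (fun v _ => ?_)
  · rw [hflip, signChar_add, show signChar 1 = -1 from rfl]
    ring
  · simp
  · rw [mem_Δ] at hv ⊢
    intro i hi
    simp [hv i hi, show i ≠ i₀ from fun h => hi (h ▸ hi₀)]
  · rw [add_assoc, ZModModule.add_self, add_zero]

theorem sum_signChar_codeMap (D₁ D₂ D₃ : Finset (V m)) (α β γ : V m) :
    ∑ d, signChar (codeMap D₁ D₂ D₃ (α, β, γ) d)
      = (∑ v ∈ D₁, signChar (dot α v)) * (∑ v ∈ D₂, signChar (dot (β + γ) v))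
        * ∑ v ∈ D₃, signChar (dot β v) := by
  rw [← Finset.sum_coe_sort D₁, ← Finset.sum_coe_sort D₂, ← Finset.sum_coe_sort D₃, mul_assoc, Finset.sum_mul_sum, Finset.sum_mul_sum]
  simp only [codeMap_apply, signChar_add, Fintype.sum_prod_type, Finset.mul_sum, mul_assoc]

theorem card_compl_Δ (L : Finset (Fin m)) : ((Δ L)ᶜ.card : ℤ) = 2 ^ m - 2 ^ L.card := by
  have h : ((Δ L)ᶜ.card : ℤ) + 2 ^ L.card = 2 ^ m := by
    have h := (Δ L).card_compl_add_card
    rw [card_Δ, Fintype.card_fun, ZMod.card, Fintype.card_fin] at h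
    exact_mod_cast h
  linarith

theorem sum_signChar_dot_compl_Δ (L : Finset (Fin m)) (x : V m) :
    ∑ v ∈ (Δ L)ᶜ, signChar (dot x v)
      = (if x = 0 then 2 ^ m else 0) - if ∀ i ∈ L, x i = 0 then 2 ^ L.card else 0 := by
  have huniv := sum_signChar_dot_Δ Finset.univ x
  rw [Δ_univ, Finset.card_univ, Fintype.card_fin] at huniv
  rw [eq_sub_iff_add_eq, ← sum_signChar_dot_Δ, Finset.sum_compl_add_sum, huniv]
  simp [funext_iff]

section Code

variable (L M N : Finset (Fin m))

theorem two_mul_wtv_codeMap (α β γ : V m) :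
    2 * (wtv (codeMap (Δ L)ᶜ (Δ M) (Δ N) (α, β, γ)) : ℤ) = 0 ∨
      2 * (wtv (codeMap (Δ L)ᶜ (Δ M) (Δ N) (α, β, γ)) : ℤ)
        = (2 ^ m - 2 ^ L.card) * 2 ^ (M.card + N.card) ∨
      2 * (wtv (codeMap (Δ L)ᶜ (Δ M) (Δ N) (α, β, γ)) : ℤ) = 2 ^ (m + M.card + N.card) := by
  rw [two_mul_wtv, sum_signChar_codeMap, Fintype.card_prod, Fintype.card_prod, Fintype.card_coe,
    Fintype.card_coe, Fintype.card_coe, Nat.cast_mul, Nat.cast_mul, card_compl_Δ, card_Δ, card_Δ]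
  push_cast
  have h₁ : ∑ v ∈ (Δ L)ᶜ, signChar (dot α v) = 2 ^ m - 2 ^ L.card ∨
      ∑ v ∈ (Δ L)ᶜ, signChar (dot α v) = -2 ^ L.card ∨
      ∑ v ∈ (Δ L)ᶜ, signChar (dot α v) = 0 := by
    rw [sum_signChar_dot_compl_Δ]
    split_ifs <;> simp_all
  have h₂ : ∑ v ∈ Δ M, signChar (dot (β + γ) v) = 2 ^ M.card ∨
      ∑ v ∈ Δ M, signChar (dot (β + γ) v) = 0 := by
    rw [sum_signChar_dot_Δ]
    split_ifs <;> simp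
  have h₃ : ∑ v ∈ Δ N, signChar (dot β v) = 2 ^ N.card ∨
      ∑ v ∈ Δ N, signChar (dot β v) = 0 := by
    rw [sum_signChar_dot_Δ]
    split_ifs <;> simp
  rcases h₁ with h₁ | h₁ | h₁ <;> rcases h₂ with h₂ | h₂ <;> rcases h₃ with h₃ | h₃ <;>
    rw [h₁, h₂, h₃] <;>
    first | (left; ring1) | (right; left; ring1) | (right; right; ring1)

variable {L M N}

theorem four_dvd_wtv_codeMap (hMN : 3 ≤ M.card + N.card) (α β γ : V m) :
    4 ∣ wtv (codeMap (Δ L)ᶜ (Δ M) (Δ N) (α, β, γ)) := by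
  have h8 : (8 : ℤ) ∣ 2 ^ (M.card + N.card) := pow_dvd_pow 2 hMN
  have h8' : (8 : ℤ) ∣ 2 ^ (m + M.card + N.card) := by
    rw [add_assoc, pow_add]; exact Dvd.dvd.mul_left h8 _
  rcases two_mul_wtv_codeMap L M N α β γ with h | h | h
  · omega
  · have := Dvd.dvd.mul_left h8 (2 ^ m - 2 ^ L.card)
    omega
  · omega

theorem wtv_codeMap_lt_two_mul (hL : L.card + 2 ≤ m) {x y : V m × V m × V m}
    (hx : codeMap (Δ L)ᶜ (Δ M) (Δ N) x ≠ 0) (hy : codeMap (Δ L)ᶜ (Δ M) (Δ N) y ≠ 0) :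
    wtv (codeMap (Δ L)ᶜ (Δ M) (Δ N) x) < 2 * wtv (codeMap (Δ L)ᶜ (Δ M) (Δ N) y) := by
  obtain ⟨α, β, γ⟩ := x
  obtain ⟨α', β', γ'⟩ := y
  rw [Ne, ← wtv_eq_zero_iff] at hx hy
  have hK : (0 : ℤ) < 2 ^ (M.card + N.card) := by positivity
  have hpow : (2 : ℤ) * 2 ^ L.card < 2 ^ m := by
    rw [← pow_succ']; exact pow_lt_pow_right₀ one_lt_two (by omega)
  have hB : (2 : ℤ) ^ (m + M.card + N.card) = 2 ^ m * 2 ^ (M.card + N.card) := by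
    rw [add_assoc, pow_add]
  have hlt : (2 : ℤ) ^ (m + M.card + N.card)
      < 2 * ((2 ^ m - 2 ^ L.card) * 2 ^ (M.card + N.card)) := by
    rw [hB]; nlinarith
  have hle : ((2 : ℤ) ^ m - 2 ^ L.card) * 2 ^ (M.card + N.card) ≤ 2 ^ (m + M.card + N.card) := by
    rw [hB]; nlinarith [pow_pos (two_pos : (0 : ℤ) < 2) L.card]
  have hu := two_mul_wtv_codeMap L M N α β γ
  have hv := two_mul_wtv_codeMap L M N α' β' γ'
  generalize ((2 : ℤ) ^ m - 2 ^ L.card) * 2 ^ (M.card + N.card) = A at *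
  generalize (2 : ℤ) ^ (m + M.card + N.card) = B at *
  omega

end Code

end SimplexCode

theorem stmt15_general (m : ℕ) (L M N : Finset (Fin m)) :
    (L.card + 2 ≤ m →
      IsMinimalCode (SetLike.coe (LinearMap.range (codeMap (Δ L)ᶜ (Δ M) (Δ N))))) ∧
    (3 ≤ M.card + N.card →
      IsSelfOrthogonal (SetLike.coe (LinearMap.range (codeMap (Δ L)ᶜ (Δ M) (Δ N))))) := by
  constructor
  · intro hL
    refine isMinimalCode_of_wtv_lt_two_mul _ ?_
    rintro _ ⟨x, rfl⟩ _ ⟨y, rfl⟩ hx hy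
    exact wtv_codeMap_lt_two_mul hL hx hy
  · intro hMN
    refine isSelfOrthogonal_of_four_dvd_wtv _ ?_
    rintro _ ⟨⟨α, β, γ⟩, rfl⟩
    exact four_dvd_wtv_codeMap hMN α β γ

/-- Theorem 4.2, row 2: if `|L| ≤ m − 2` then `C(Δ_L^c, Δ_M, Δ_N)` is
minimal, and if `|M|+|N| ≥ 3` it is self-orthogonal. -/
theorem stmt15 (m : ℕ) (hm : 1 ≤ m) (L M N : Finset (Fin m))
    (hL : L ⊂ Finset.univ) :
    (L.card + 2 ≤ m →
      IsMinimalCode (SetLike.coe (LinearMap.range (codeMap (Δ L)ᶜ (Δ M) (Δ N))))) ∧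
    (3 ≤ M.card + N.card →
      IsSelfOrthogonal (SetLike.coe (LinearMap.range (codeMap (Δ L)ᶜ (Δ M) (Δ N))))) :=
  stmt15_general m L M N
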